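/- Let H be a graph, v a vertex of H, and let H' be obtained from H by cleaving v: split v into two copies v_1 and v_2, distribute the edges incident to v between v_1 and v_2 according to a bipartition, and add an edge v_1v_2. Suppose the original cycle structure gives two edge-disjoint v_1-to-v_2 paths in H' not using the new edge. Then, for k = 1, 2, 3: if a vertex u is k-edge-connected to v in H, then u is k-edge-connected to each of v_1 and v_2 in H'. -/

import Mathlib

open SimpleGraph

universe u

variable {V : Type u}

/-- Two walks with the same endpoints are internally vertex-disjoint. -/
def IntDisjoint {G : SimpleGraph V} {x y : V} (p q : G.Walk x y) : Prop :=
  ∀ v ∈ p.support, v ∈ q.support → v = x ∨ v = y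

/-- There are `k` pairwise internally vertex-disjoint `x`-`y` paths in `G`. -/
def ConnK (G : SimpleGraph V) (k : ℕ) (x y : V) : Prop :=
  ∃ P : Fin k → G.Walk x y, (∀ i, (P i).IsPath) ∧
    ∀ i j, i ≠ j → IntDisjoint (P i) (P j)

/-- `G` is `(Q,r)`-vertex-connected. -/
def QRConn (G : SimpleGraph V) (Q : Set V) (r : V → ℕ) : Prop :=
  ∀ x ∈ Q, ∀ y ∈ Q, x ≠ y → ConnK G (min (r x) (r y)) x y

/-- Delete a vertex (isolate it). -/
def delV (G : SimpleGraph V) (v : V) : SimpleGraph V where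
  Adj a b := G.Adj a b ∧ a ≠ v ∧ b ≠ v
  symm := ⟨by intro a b h; exact ⟨h.1.symm, h.2.2, h.2.1⟩⟩
  loopless := ⟨by intro a h; exact G.loopless.irrefl a h.1⟩

/-- `G` is minimally `(Q,r)`-vertex-connected: it is `(Q,r)`-vertex-connected but
deleting any edge or any vertex destroys this property. -/
def MinQR (G : SimpleGraph V) (Q : Set V) (r : V → ℕ) : Prop :=
  QRConn G Q r ∧ (∀ e ∈ G.edgeSet, ¬ QRConn (G.deleteEdges {e}) Q r) ∧
    ∀ v : V, ¬ QRConn (delV G v) Q r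

/-- Biconnected: at least 3 vertices, connected, and no cut vertex. -/
def Biconnected (G : SimpleGraph V) : Prop :=
  3 ≤ Nat.card V ∧ G.Connected ∧ ∀ v : V, (SimpleGraph.induce {w | w ≠ v} G).Connected

/-- Three-vertex-connected: more than 3 vertices and removing any at most 2
vertices leaves the graph connected. -/
def ThreeConnected (G : SimpleGraph V) : Prop :=
  4 ≤ Nat.card V ∧ ∀ s : Set V, s.ncard ≤ 2 → (SimpleGraph.induce sᶜ G).Connected

/-- Degree of a vertex. -/
noncomputable def vdeg (G : SimpleGraph V) (v : V) : ℕ := (G.neighborSet v).ncard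

/-- The contracted version of `G`: suppress all degree-2 vertices.  Two vertices of
degree `≠ 2` are adjacent iff they are joined by a path all of whose internal
vertices have degree 2. -/
def suppress (G : SimpleGraph V) : SimpleGraph {v : V // vdeg G v ≠ 2} where
  Adj u v := u ≠ v ∧ ∃ p : G.Walk u.1 v.1, p.IsPath ∧
      ∀ w ∈ p.support, w ≠ u.1 → w ≠ v.1 → vdeg G w = 2
  symm := ⟨by
    rintro u v ⟨hne, p, hp, hint⟩
    refine ⟨hne.symm, p.reverse, hp.reverse, ?_⟩
    intro w hw h1 h2
    rw [SimpleGraph.Walk.support_reverse, List.mem_reverse] at hw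
    exact hint w hw h2 h1⟩
  loopless := ⟨by intro u h; exact h.1 rfl⟩

/-- The removal operation of Holton–Jackson–Saito–Wormald: delete the edge `uv`,
suppress any resulting degree-2 vertices and simplify parallel edges; the edge is
removable when the result is three-connected. -/
def Removable (G : SimpleGraph V) (u v : V) : Prop :=
  ThreeConnected (suppress (G.deleteEdges {s(u, v)}))

/-- There are `k` pairwise edge-disjoint `x`-`y` paths in `G`. -/
def EdgeConnK (G : SimpleGraph V) (k : ℕ) (x y : V) : Prop :=
  ∃ P : Fin k → G.Walk x y, (∀ i, (P i).IsPath) ∧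
    ∀ i j, i ≠ j → ∀ e ∈ (P i).edges, e ∉ (P j).edges

/-!
A `u`-`v` walk of `H`, cut at its first arrival at `v`, lifts to a walk of `H'` from `u` to one
of the two copies of `v`, and every edge of the lift projects onto an edge of the original walk.
Hence deleting fewer than `k` edges of `H'` leaves `u` joined to one copy, and the three
edge-disjoint paths between the copies join it to the other: `u` is `k`-edge-reachable from both
copies in the cut sense. Menger's theorem, proved by augmenting unit flows along residual paths,
turns this back into `k` edge-disjoint paths.
-/

theorem Fin.pairwise_cons {α : Type*} {r : α → α → Prop} (hr : ∀ a b, r a b → r b a) {n : ℕ}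
    {x : α} {P : Fin n → α} (hx : ∀ i, r x (P i)) (hP : Pairwise fun i j => r (P i) (P j)) :
    Pairwise fun i j =>
      r ((Fin.cons x P : Fin (n + 1) → α) i) ((Fin.cons x P : Fin (n + 1) → α) j) := by
  intro i j hij
  cases i using Fin.cases <;> cases j using Fin.cases
  · exact absurd rfl hij
  · simpa using hx _
  · simpa using hr _ _ (hx _)
  · simpa using hP (fun h => hij (by rw [h]))

namespace SimpleGraph

variable {W : Type*} {G : SimpleGraph W}

noncomputable def Dart.flux (d : G.Dart) (S : Set W) : ℤ :=
  S.indicator 1 d.fst - S.indicator 1 d.snd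

@[simp]
theorem Dart.flux_symm (d : G.Dart) (S : Set W) : d.symm.flux S = -d.flux S := by
  simp [Dart.flux]

theorem Dart.flux_singleton [DecidableEq W] (d : G.Dart) (v : W) :
    d.flux {v} = (if d.fst = v then 1 else 0) - if d.snd = v then 1 else 0 := by
  simp only [Dart.flux, Set.indicator_singleton, Pi.single_apply, Pi.one_apply]

theorem exists_mem_fst_eq_of_sum_flux_pos [DecidableEq W] {f : Finset G.Dart} {x : W}
    (h : 0 < ∑ d ∈ f, d.flux {x}) : ∃ d ∈ f, d.fst = x := by
  by_contra! hf
  refine h.not_ge (Finset.sum_nonpos fun d hd => ?_)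
  rw [Dart.flux_singleton, if_neg (hf d hd)]
  split_ifs <;> norm_num

theorem exists_walk_of_sum_flux_pos [DecidableEq W] (b : W) (f : Finset G.Dart) (x : W)
    (hxb : x ≠ b) (hnonneg : ∀ v ≠ b, 0 ≤ ∑ d ∈ f, d.flux {v}) (hx : 0 < ∑ d ∈ f, d.flux {x}) :
    ∃ (w : G.Walk x b) (g : Finset G.Dart), g ⊆ f ∧ (∀ d ∈ w.darts, d ∈ f \ g) ∧
      ∀ S : Set W, ∑ d ∈ g, d.flux S =
        ∑ d ∈ f, d.flux S - (S.indicator 1 x - S.indicator 1 b) := by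
  induction f using Finset.strongInduction generalizing x with
  | _ f ih =>
  obtain ⟨d, hd, rfl⟩ := exists_mem_fst_eq_of_sum_flux_pos hx
  have herase (S : Set W) : ∑ e ∈ f.erase d, e.flux S = ∑ e ∈ f, e.flux S - d.flux S :=
    Finset.sum_erase_eq_sub hd
  by_cases hy : d.snd = b
  · subst hy
    refine ⟨Walk.cons d.adj Walk.nil, f.erase d, Finset.erase_subset _ _, ?_, fun S => herase S⟩
    simp [Finset.mem_sdiff, hd]
  have hnonneg' : ∀ v ≠ b, 0 ≤ ∑ e ∈ f.erase d, e.flux {v} := by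
    intro v hvb
    rw [herase, Dart.flux_singleton]
    by_cases hv : d.fst = v
    · subst hv
      split_ifs <;> omega
    · have := hnonneg v hvb
      rw [if_neg hv]
      split_ifs <;> omega
  have hpos' : 0 < ∑ e ∈ f.erase d, e.flux {d.snd} := by
    have := hnonneg d.snd hy
    rw [herase, Dart.flux_singleton, if_neg d.fst_ne_snd, if_pos rfl]
    omega
  obtain ⟨w, g, hgf, hw, hsum⟩ := ih _ (Finset.erase_ssubset hd) d.snd hy hnonneg' hpos'
  refine ⟨Walk.cons d.adj w, g, hgf.trans (Finset.erase_subset _ _), ?_, fun S => ?_⟩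
  · simp only [Walk.darts_cons, List.mem_cons, forall_eq_or_imp]
    refine ⟨Finset.mem_sdiff.2 ⟨hd, fun h => Finset.notMem_erase d f (hgf h)⟩, fun e he => ?_⟩
    exact Finset.sdiff_subset_sdiff (Finset.erase_subset _ _) le_rfl (hw e he)
  · rw [hsum, herase, Dart.flux]
    ring

/-- Each edge carries at most one unit of flow, in the direction of the dart of `f` on it. -/
structure IsFlow (f : Finset G.Dart) (a b : W) (j : ℕ) : Prop where
  symm_notMem : ∀ d ∈ f, d.symm ∉ f
  sum_flux : ∀ S : Set W, ∑ d ∈ f, d.flux S = j * (S.indicator 1 a - S.indicator 1 b)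

theorem disjoint_edges_of_darts_mem {f g : Finset G.Dart} (hf : ∀ d ∈ f, d.symm ∉ f)
    (hgf : g ⊆ f) {x y x' y' : W} {p : G.Walk x y} {q : G.Walk x' y'}
    (hp : ∀ d ∈ p.darts, d ∈ f ∧ d ∉ g) (hq : ∀ d ∈ q.darts, d ∈ g) :
    p.edges.Disjoint q.edges := by
  intro e hep heq
  obtain ⟨d, hd, rfl⟩ := List.mem_map.1 hep
  obtain ⟨d', hd', hdd'⟩ := List.mem_map.1 heq
  rcases (dart_edge_eq_iff d' d).1 hdd' with rfl | rfl
  · exact (hp _ hd).2 (hq _ hd')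
  · exact hf _ (hgf (hq _ hd')) (by simpa using (hp _ hd).1)

theorem IsFlow.exists_edgeDisjoint_walks [DecidableEq W] {a b : W} (hab : a ≠ b) {k : ℕ}
    {f : Finset G.Dart} (hf : IsFlow f a b k) :
    ∃ P : Fin k → G.Walk a b, (∀ i, ∀ d ∈ (P i).darts, d ∈ f) ∧
      Pairwise fun i j => (P i).edges.Disjoint (P j).edges := by
  induction k generalizing f with
  | zero => exact ⟨Fin.elim0, fun i => i.elim0, fun i => i.elim0⟩
  | succ k ih =>
  have hnonneg (v : W) (hvb : v ≠ b) : 0 ≤ ∑ d ∈ f, d.flux {v} := by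
    rw [hf.sum_flux, Set.indicator_of_notMem (Set.notMem_singleton_iff.2 hvb.symm), sub_zero]
    exact mul_nonneg (by positivity) (Set.indicator_nonneg (fun _ _ => zero_le_one) _)
  have hpos : 0 < ∑ d ∈ f, d.flux {a} := by
    rw [hf.sum_flux]
    simp [hab.symm]
  obtain ⟨w, g, hgf, hw, hg⟩ := exists_walk_of_sum_flux_pos b f a hab hnonneg hpos
  have hgflow : IsFlow g a b k :=
    ⟨fun d hd h => hf.symm_notMem d (hgf hd) (hgf h), fun S => by
      rw [hg, hf.sum_flux]
      push_cast
      ring⟩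
  obtain ⟨P, hPg, hP⟩ := ih hgflow
  have hw' (d : G.Dart) (hd : d ∈ w.darts) : d ∈ f ∧ d ∉ g := Finset.mem_sdiff.1 (hw d hd)
  refine ⟨Fin.cons w P, fun i => ?_, Fin.pairwise_cons (r := fun p q : G.Walk a b =>
    p.edges.Disjoint q.edges) (fun _ _ h => h.symm)
    (fun i => disjoint_edges_of_darts_mem hf.symm_notMem hgf hw' (hPg i)) hP⟩
  cases i using Fin.cases
  · simpa using fun d hd => (hw' d hd).1
  · simpa using fun d hd => hgf (hPg _ d hd)

theorem exists_push_along_dart [DecidableEq W] {f : Finset G.Dart} (hf : ∀ e ∈ f, e.symm ∉ f)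
    {d : G.Dart} (hd : d ∉ f) :
    ∃ f' : Finset G.Dart, (∀ e ∈ f', e.symm ∉ f') ∧ (∀ e, e.edge ≠ d.edge → (e ∈ f' ↔ e ∈ f)) ∧
      ∀ S : Set W, ∑ e ∈ f', e.flux S = ∑ e ∈ f, e.flux S + d.flux S := by
  by_cases hsymm : d.symm ∈ f
  · refine ⟨f.erase d.symm, fun e he h => hf e (Finset.mem_of_mem_erase he)
      (Finset.mem_of_mem_erase h), fun e he => ?_, fun S => ?_⟩
    · exact Finset.mem_erase.trans (and_iff_right fun h => he (by rw [h, Dart.edge_symm]))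
    · rw [Finset.sum_erase_eq_sub hsymm, Dart.flux_symm, sub_neg_eq_add]
  · refine ⟨insert d f, fun e he h => ?_, fun e he => ?_, fun S => ?_⟩
    · rcases Finset.mem_insert.1 he with rfl | he
      · rcases Finset.mem_insert.1 h with h | h
        · exact e.symm_ne h
        · exact hsymm h
      · rcases Finset.mem_insert.1 h with h | h
        · exact hsymm (by rw [← h, Dart.symm_symm]; exact he)
        · exact hf e he h
    · exact Finset.mem_insert.trans (or_iff_right fun h => he (by rw [h]))
    · rw [Finset.sum_insert hd, add_comm]

theorem exists_push_along_trail [DecidableEq W] {f : Finset G.Dart}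
    (hf : ∀ e ∈ f, e.symm ∉ f) {x y : W} (p : G.Walk x y) (hp : p.IsTrail)
    (hpf : ∀ d ∈ p.darts, d ∉ f) :
    ∃ f' : Finset G.Dart, (∀ e ∈ f', e.symm ∉ f') ∧ (∀ e, e.edge ∉ p.edges → (e ∈ f' ↔ e ∈ f)) ∧
      ∀ S : Set W, ∑ e ∈ f', e.flux S =
        ∑ e ∈ f, e.flux S + (S.indicator 1 x - S.indicator 1 y) := by
  induction p with
  | nil => exact ⟨f, hf, fun _ _ => Iff.rfl, fun S => by rw [sub_self, add_zero]⟩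
  | @cons x z y h q ih =>
  rw [Walk.isTrail_cons] at hp
  simp only [Walk.darts_cons, List.mem_cons, forall_eq_or_imp] at hpf
  obtain ⟨f₁, hf₁, hagree₁, hsum₁⟩ := ih hp.1 hpf.2
  obtain ⟨f', hf', hagree', hsum'⟩ :=
    exists_push_along_dart hf₁ (d := ⟨(x, z), h⟩)
      (fun hd => hpf.1 ((hagree₁ ⟨(x, z), h⟩ hp.2).1 hd))
  refine ⟨f', hf', fun e he => ?_, fun S => ?_⟩
  · rw [Walk.edges_cons, List.mem_cons, not_or] at he
    exact (hagree' e he.1).trans (hagree₁ e he.2)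
  · rw [hsum', hsum₁, Dart.flux]
    ring

theorem sum_flux_eq_card_filter {f : Finset G.Dart} {S : Set W} [DecidablePred (· ∈ S)]
    (hS : ∀ d ∈ f, d.snd ∈ S → d.fst ∈ S) :
    ∑ d ∈ f, d.flux S = (f.filter fun d => d.fst ∈ S ∧ d.snd ∉ S).card := by
  rw [Finset.natCast_card_filter]
  refine Finset.sum_congr rfl fun d hd => ?_
  by_cases h₁ : d.fst ∈ S <;> by_cases h₂ : d.snd ∈ S
  · simp [Dart.flux, h₁, h₂]
  · simp [Dart.flux, h₁, h₂]
  · exact absurd (hS d hd h₂) h₁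
  · simp [Dart.flux, h₁, h₂]

theorem IsFlow.exists_succ [DecidableEq W] {a b : W} {j k : ℕ} {f : Finset G.Dart}
    (hf : IsFlow f a b j) (hjk : j < k) (hk : G.IsEdgeReachable k a b) :
    ∃ f' : Finset G.Dart, IsFlow f' a b (j + 1) := by
  classical
  -- By antisymmetry of `f`, a dart is residual exactly when it is not in `f`.
  set S : Set W := {x | ∃ p : G.Walk a x, ∀ d ∈ p.darts, d ∉ f}
  have haS : a ∈ S := ⟨Walk.nil, by simp⟩
  have hS (d : G.Dart) (hd : d.fst ∈ S) (hdf : d ∉ f) : d.snd ∈ S := by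
    obtain ⟨p, hp⟩ := hd
    refine ⟨p.concat d.adj, fun e he => ?_⟩
    rw [Walk.darts_concat, List.concat_eq_append, List.mem_append, List.mem_singleton] at he
    rcases he with he | rfl
    exacts [hp e he, hdf]
  by_cases hb : b ∈ S
  · obtain ⟨p, hp⟩ := hb
    obtain ⟨f', hf', -, hsum⟩ := exists_push_along_trail hf.symm_notMem p.bypass
      p.bypass_isPath.isTrail fun d hd => hp d (p.darts_bypass_subset_darts hd)
    exact ⟨f', hf', fun T => by rw [hsum, hf.sum_flux]; push_cast; ring⟩
  -- Otherwise the flow darts leaving `S` form an `a`-`b` cut of size `j < k`.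
  exfalso
  set F := f.filter fun d => d.fst ∈ S ∧ d.snd ∉ S
  have hFj : F.card = j := by
    have hin (d : G.Dart) (hd : d ∈ f) (hd₂ : d.snd ∈ S) : d.fst ∈ S := by
      simpa using hS d.symm hd₂ (hf.symm_notMem d hd)
    have := (sum_flux_eq_card_filter hin).symm.trans (hf.sum_flux S)
    rw [Set.indicator_of_mem haS, Set.indicator_of_notMem hb] at this
    simpa using this
  have hcut : (↑(F.image Dart.edge) : Set (Sym2 W)).encard < k := by
    rw [Set.encard_coe_eq_coe_finsetCard]
    exact_mod_cast (Finset.card_image_le.trans hFj.le).trans_lt hjk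
  obtain ⟨p⟩ := hk hcut
  obtain ⟨d, -, hd₁, hd₂⟩ := p.exists_boundary_dart S haS hb
  obtain ⟨hadj, hnot⟩ := deleteEdges_adj.1 d.adj
  by_cases hdf : (⟨d.toProd, hadj⟩ : G.Dart) ∈ f
  · exact hnot (Finset.mem_image_of_mem Dart.edge (Finset.mem_filter.2 ⟨hdf, hd₁, hd₂⟩))
  · exact hd₂ (hS _ hd₁ hdf)

theorem IsEdgeReachable.exists_isFlow [DecidableEq W] {a b : W} {k : ℕ}
    (hk : G.IsEdgeReachable k a b) : ∃ f : Finset G.Dart, IsFlow f a b k := by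
  suffices ∀ j ≤ k, ∃ f : Finset G.Dart, IsFlow f a b j from this k le_rfl
  intro j hj
  induction j with
  | zero => exact ⟨∅, by simp, by simp⟩
  | succ j ih =>
    obtain ⟨f, hf⟩ := ih (by omega)
    exact hf.exists_succ (by omega) hk

theorem IsEdgeReachable.edgeConnK {a b : W} {k : ℕ} (h : G.IsEdgeReachable k a b) :
    EdgeConnK G k a b := by
  classical
  obtain rfl | hab := eq_or_ne a b
  · exact ⟨fun _ => Walk.nil, fun _ => Walk.IsPath.nil, fun _ _ _ _ he => by simp at he⟩
  obtain ⟨f, hf⟩ := h.exists_isFlow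
  obtain ⟨P, -, hP⟩ := hf.exists_edgeDisjoint_walks hab
  exact ⟨fun i => (P i).bypass, fun i => (P i).bypass_isPath, fun i j hij e hi hj =>
    hP hij ((P i).edges_bypass_subset_edges hi) ((P j).edges_bypass_subset_edges hj)⟩

theorem _root_.EdgeConnK.isEdgeReachable {a b : W} {k : ℕ} (h : EdgeConnK G k a b) :
    G.IsEdgeReachable k a b := by
  obtain ⟨P, -, hP⟩ := h
  intro s hs
  by_contra hns
  choose g hgs hgP using fun i => (P i).exists_mem_edges_of_not_reachable_deleteEdges hns
  have hg : g.Injective := fun i j hij => by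
    by_contra hne
    exact hP i j hne _ (hgP i) (hij ▸ hgP j)
  have := hg.encard_range.trans (Set.encard_le_encard (Set.range_subset_iff.2 hgs))
  simp only [ENat.card_eq_coe_fintype_card, Fintype.card_fin] at this
  exact this.not_gt hs

end SimpleGraph

theorem reachable_some_or_none_of_reachable {H : SimpleGraph V} {v : V} {B : Set V}
    {H' : SimpleGraph (Option V)}
    (hsome : ∀ a b : V, H'.Adj (some a) (some b) ↔
        (H.Adj a b ∧ ¬(a = v ∧ b ∈ B) ∧ ¬(b = v ∧ a ∈ B)))
    (hnone : ∀ a : V, H'.Adj (some a) none ↔ (a = v ∨ a ∈ B))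
    (s : Set (Sym2 (Option V))) {u : V}
    (hu : (H.deleteEdges (Sym2.map (Option.getD · v) '' s)).Reachable u v) :
    (H'.deleteEdges s).Reachable (some u) (some v) ∨
      (H'.deleteEdges s).Reachable (some u) none := by
  obtain ⟨p⟩ := hu
  suffices ∀ {x w : V} (p : (H.deleteEdges (Sym2.map (Option.getD · v) '' s)).Walk x w),
      w = v → (H'.deleteEdges s).Reachable (some x) (some v) ∨
        (H'.deleteEdges s).Reachable (some x) none from this p rfl
  intro x w p hw
  induction p with
  | nil => exact .inl (hw ▸ .rfl)
  | @cons x y w h q ih =>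
  obtain rfl | hx := eq_or_ne x v
  · exact .inl .rfl
  obtain ⟨hxy, hxy'⟩ := deleteEdges_adj.1 h
  have hnot (o : Option V) (ho : o.getD v = y) : s(some x, o) ∉ s := fun he =>
    hxy' ⟨_, he, by rw [Sym2.map_mk, Option.getD_some, ho]⟩
  by_cases hy : y = v
  · subst hy
    by_cases hxB : x ∈ B
    · exact .inr (deleteEdges_adj.2 ⟨(hnone x).2 (.inr hxB), hnot none rfl⟩).reachable
    · exact .inl (deleteEdges_adj.2
        ⟨(hsome x y).2 ⟨hxy, fun h => hx h.1, fun h => hxB h.2⟩, hnot (some y) rfl⟩).reachable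
  · have hadj : (H'.deleteEdges s).Adj (some x) (some y) :=
      deleteEdges_adj.2 ⟨(hsome x y).2 ⟨hxy, fun h => hx h.1, fun h => hy h.1⟩, hnot (some y) rfl⟩
    exact (ih hw).imp hadj.reachable.trans hadj.reachable.trans

theorem stmt_15_general (H : SimpleGraph V) (v : V) (B : Set V)
    (H' : SimpleGraph (Option V))
    (hsome : ∀ a b : V, H'.Adj (some a) (some b) ↔
        (H.Adj a b ∧ ¬(a = v ∧ b ∈ B) ∧ ¬(b = v ∧ a ∈ B)))
    (hnone : ∀ a : V, H'.Adj (some a) none ↔ (a = v ∨ a ∈ B))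
    (h3 : EdgeConnK H' 3 (some v) none) :
    ∀ k ∈ ({1, 2, 3} : Set ℕ), ∀ u : V, EdgeConnK H k u v →
      EdgeConnK H' k (some u) (some v) ∧ EdgeConnK H' k (some u) none := by
  intro k hk u hu
  have hk3 : k ≤ 3 := by rcases hk with rfl | rfl | rfl <;> norm_num
  have hcopies : H'.IsEdgeReachable k (some v) none := h3.isEdgeReachable.anti hk3
  have hreach (s : Set (Sym2 (Option V))) (hs : s.encard < k) :
      (H'.deleteEdges s).Reachable (some u) (some v) ∧
        (H'.deleteEdges s).Reachable (some u) none := by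
    have hu' := hu.isEdgeReachable
      ((Set.encard_image_le (Sym2.map (Option.getD · v)) s).trans_lt hs)
    rcases reachable_some_or_none_of_reachable hsome hnone s hu' with h | h
    exacts [⟨h, h.trans (hcopies hs)⟩, ⟨h.trans (hcopies hs).symm, h⟩]
  exact ⟨IsEdgeReachable.edgeConnK fun s hs => (hreach s hs).1,
    IsEdgeReachable.edgeConnK fun s hs => (hreach s hs).2⟩

/-- Let `H'` be obtained from `H` by cleaving the vertex `v` with
edge bipartition `(A, B)`: `v` itself plays the role of the copy `v₁`
(as `some v`) and `none` is the new copy `v₂`, joined to `v₁` by a new edge.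
If the two copies are 3-edge-connected in `H'`, then for `k = 1, 2, 3`, any
vertex `u` that is `k`-edge-connected to `v` in `H` is `k`-edge-connected to
both copies of `v` in `H'`. -/
theorem stmt_15 (H : SimpleGraph V) (v : V) (A B : Set V)
    (hpart : A ∪ B = H.neighborSet v) (hdisj : Disjoint A B)
    (H' : SimpleGraph (Option V))
    (hsome : ∀ a b : V, H'.Adj (some a) (some b) ↔
        (H.Adj a b ∧ ¬(a = v ∧ b ∈ B) ∧ ¬(b = v ∧ a ∈ B)))
    (hnone : ∀ a : V, H'.Adj (some a) none ↔ (a = v ∨ a ∈ B))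
    (h3 : EdgeConnK H' 3 (some v) none) :
    ∀ k ∈ ({1, 2, 3} : Set ℕ), ∀ u : V, EdgeConnK H k u v →
      EdgeConnK H' k (some u) (some v) ∧ EdgeConnK H' k (some u) none :=
  stmt_15_general H v B H' hsome hnone h3
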